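/- Let T be a rooted binary tree whose root ρ has children y₁ and y₂ with edge substitution probabilities p₁ and p₂, and let Y₁, Y₂ be the leaf sets of the subtrees rooted at y₁, y₂, with X = Y₁ ∪ Y₂. With P_i = 1 − 2p_i, the Fitch probabilities satisfy the recursion P_α(X) = [((1+P₁)/2)·P_α(Y₁) + ((1−P₁)/2)·P_β(Y₁)]·[((1+P₂)/2)·P_α(Y₂) + ((1−P₂)/2)·P_β(Y₂)] + P_{αβ}(Y₁)·[((1+P₂)/2)·P_α(Y₂) + ((1−P₂)/2)·P_β(Y₂)] + [((1+P₁)/2)·P_α(Y₁) + ((1−P₁)/2)·P_β(Y₁)]·P_{αβ}(Y₂). -/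

import Mathlib

/-!
Model: rooted binary phylogenetic trees whose edges carry substitution
probabilities, evolving binary characters (states `true` = α, `false` = β)
under the two-state symmetric (Neyman) model, and Fitch's maximum parsimony
algorithm.
-/

/-- A rooted binary tree; an internal node records the substitution
probabilities on the edges to its two children. -/
inductive PTree where
  | leaf : PTree
  | node (p₁ p₂ : ℝ) (t₁ t₂ : PTree) : PTree

/-- The type of binary characters on a tree: an assignment of a state
(`true` = α, `false` = β) to each leaf. -/
def PTree.Char : PTree → Type
  | .leaf => Bool
  | .node _ _ t₁ t₂ => t₁.Char × t₂.Char

instance PTree.Char.instFintype : (t : PTree) → Fintype t.Char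
  | .leaf => inferInstanceAs (Fintype Bool)
  | .node _ _ t₁ t₂ =>
      letI := PTree.Char.instFintype t₁
      letI := PTree.Char.instFintype t₂
      inferInstanceAs (Fintype (_ × _))

instance PTree.Char.instDecidableEq : (t : PTree) → DecidableEq t.Char
  | .leaf => inferInstanceAs (DecidableEq Bool)
  | .node _ _ t₁ t₂ =>
      letI := PTree.Char.instDecidableEq t₁
      letI := PTree.Char.instDecidableEq t₂
      inferInstanceAs (DecidableEq (_ × _))

/-- Single-edge transition probability of the two-state symmetric model:
conditional on the parent being in state `s`, the child is in state `s'`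
with probability `1 - p` if `s' = s` and `p` otherwise. -/
def transProb (p : ℝ) (s s' : Bool) : ℝ := if s' = s then 1 - p else p

/-- `t.charProb s c` is the probability that the character `c` is generated
at the leaves of `t` conditional on the root of `t` being in state `s`
(substitutions happen independently across edges). -/
def PTree.charProb : (t : PTree) → Bool → t.Char → ℝ
  | .leaf, s, c => @ite _ (c = s) (instDecidableEqBool c s) 1 0
  | .node p₁ p₂ t₁ t₂, s, c =>
      (∑ s₁ : Bool, transProb p₁ s s₁ * t₁.charProb s₁ c.1) *
      (∑ s₂ : Bool, transProb p₂ s s₂ * t₂.charProb s₂ c.2)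

/-- The state set assigned to the root by Fitch's maximum parsimony
algorithm: a leaf in state `s` gets `{s}`; an internal node gets the
intersection of the children's state sets if nonempty, else their union. -/
def PTree.fitch : (t : PTree) → t.Char → Finset Bool
  | .leaf, c => {c}
  | .node _ _ t₁ t₂, c =>
      if (t₁.fitch c.1 ∩ t₂.fitch c.2).Nonempty then t₁.fitch c.1 ∩ t₂.fitch c.2
      else t₁.fitch c.1 ∪ t₂.fitch c.2

/-- `P_α`: probability, conditional on the root being in state α, that MP
returns the state set `{α}`. -/
noncomputable def PTree.probAlpha (t : PTree) : ℝ :=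
  ∑ c : t.Char, if t.fitch c = {true} then t.charProb true c else 0

/-- `P_β`: probability, conditional on the root being in state α, that MP
returns the state set `{β}`. -/
noncomputable def PTree.probBeta (t : PTree) : ℝ :=
  ∑ c : t.Char, if t.fitch c = {false} then t.charProb true c else 0

/-- `P_{αβ}`: probability, conditional on the root being in state α, that MP
returns the state set `{α, β}`. -/
noncomputable def PTree.probBoth (t : PTree) : ℝ :=
  ∑ c : t.Char, if t.fitch c = ({true, false} : Finset Bool) then t.charProb true c else 0

/-- The reconstruction accuracy `RA = UA + AA/2` of maximum parsimony on all
leaves of `t`, the conditioning root state being the root of `t` itself. -/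
noncomputable def PTree.RA (t : PTree) : ℝ := t.probAlpha + t.probBoth / 2

/-- Probability of the character `c` on `t` conditional on the state `s` of an
ancestor vertex joined to the root of `t` by an edge of substitution
probability `p`. -/
noncomputable def PTree.charProbVia (t : PTree) (p : ℝ) (s : Bool) (c : t.Char) : ℝ :=
  ∑ s' : Bool, transProb p s s' * t.charProb s' c

/-- Reconstruction accuracy of MP applied to the subtree `t` (rooted at `y`),
where the ancestral state being estimated is that of a vertex `ρ` joined to
`y` by an edge of substitution probability `p`:
`RA = P(MP = {α} | ρ = α) + (1/2)·P(MP = {α,β} | ρ = α)`. -/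
noncomputable def PTree.RAVia (t : PTree) (p : ℝ) : ℝ :=
  (∑ c : t.Char, if t.fitch c = {true} then t.charProbVia p true c else 0) +
  (∑ c : t.Char, if t.fitch c = ({true, false} : Finset Bool) then t.charProbVia p true c else 0) / 2

/-- All edge substitution probabilities lie in `[0, 1/2]`. -/
def PTree.valid : PTree → Prop
  | .leaf => True
  | .node p₁ p₂ t₁ t₂ => 0 ≤ p₁ ∧ p₁ ≤ 1/2 ∧ 0 ≤ p₂ ∧ p₂ ≤ 1/2 ∧ t₁.valid ∧ t₂.valid

/-- The list of net substitution probabilities from the root to each leaf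
(obtained by chaining the single-edge substitution probabilities). -/
def PTree.leafFlipProbs : PTree → List ℝ
  | .leaf => [0]
  | .node p₁ p₂ t₁ t₂ =>
      (t₁.leafFlipProbs.map fun r => (1 - p₁) * r + p₁ * (1 - r)) ++
      (t₂.leafFlipProbs.map fun r => (1 - p₂) * r + p₂ * (1 - r))

/-- The balanced binary tree of depth `n` with substitution probability `q`
on every edge. -/
def balanced (q : ℝ) : ℕ → PTree
  | 0 => .leaf
  | n + 1 => .node q q (balanced q n) (balanced q n)

/-- `P_α(n,q)` for the balanced tree of depth `n`. -/
noncomputable def Palpha (n : ℕ) (q : ℝ) : ℝ := (balanced q n).probAlpha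

/-- `P_β(n,q)` for the balanced tree of depth `n`. -/
noncomputable def Pbeta (n : ℕ) (q : ℝ) : ℝ := (balanced q n).probBeta

/-- `P_{αβ}(n,q)` for the balanced tree of depth `n`. -/
noncomputable def Palphabeta (n : ℕ) (q : ℝ) : ℝ := (balanced q n).probBoth

/-! The two root states are exchanged by complementing every leaf state of a character, which
complements every Fitch set; hence all conditional probabilities given root state `β` reduce to
those given root state `α`. Conditional on the root state, the two subtrees evolve independently,
and the Fitch set at the root is `{α}` exactly when the children's sets are `{α},{α}`,
`{α,β},{α}` or `{α},{α,β}`; summing over these three cases gives the recursion. -/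

namespace PTree

def fitchStep (S₁ S₂ : Finset Bool) : Finset Bool :=
  if (S₁ ∩ S₂).Nonempty then S₁ ∩ S₂ else S₁ ∪ S₂

theorem fitch_node (p₁ p₂ : ℝ) (t₁ t₂ : PTree) (c : (node p₁ p₂ t₁ t₂).Char) :
    (node p₁ p₂ t₁ t₂).fitch c = fitchStep (t₁.fitch c.1) (t₂.fitch c.2) :=
  rfl

theorem charProb_node (p₁ p₂ : ℝ) (t₁ t₂ : PTree) (s : Bool) (c : (node p₁ p₂ t₁ t₂).Char) :
    (node p₁ p₂ t₁ t₂).charProb s c = t₁.charProbVia p₁ s c.1 * t₂.charProbVia p₂ s c.2 :=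
  rfl

theorem sum_char_node {M : Type*} [AddCommMonoid M] (p₁ p₂ : ℝ) (t₁ t₂ : PTree)
    (f : (node p₁ p₂ t₁ t₂).Char → M) : ∑ c, f c = ∑ c₁ : t₁.Char, ∑ c₂ : t₂.Char, f (c₁, c₂) :=
  Fintype.sum_prod_type f

theorem fitch_nonempty : (t : PTree) → (c : t.Char) → (t.fitch c).Nonempty
  | .leaf, _ => Finset.singleton_nonempty _
  | .node _ _ t₁ t₂, c => by
      rw [fitch_node, fitchStep]
      split_ifs with h
      · exact h
      · exact (t₁.fitch_nonempty c.1).mono Finset.subset_union_left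

theorem fitchStep_eq_singleton_iff {S₁ S₂ : Finset Bool} (h₁ : S₁.Nonempty) (h₂ : S₂.Nonempty)
    (b : Bool) :
    fitchStep S₁ S₂ = {b} ↔
      (S₁ = {b} ∧ S₂ = {b}) ∨ (S₁ = .univ ∧ S₂ = {b}) ∨ (S₁ = {b} ∧ S₂ = .univ) := by
  revert S₁ S₂ b
  unfold fitchStep
  decide

theorem ite_fitchStep_eq_singleton {R : Type*} [NonUnitalNonAssocSemiring R]
    {S₁ S₂ : Finset Bool} (h₁ : S₁.Nonempty) (h₂ : S₂.Nonempty) (b : Bool) (x y : R) :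
    (if fitchStep S₁ S₂ = {b} then x * y else 0) =
      (if S₁ = {b} then x else 0) * (if S₂ = {b} then y else 0) +
      (if S₁ = .univ then x else 0) * (if S₂ = {b} then y else 0) +
      (if S₁ = {b} then x else 0) * (if S₂ = .univ then y else 0) := by
  have hb : ({b} : Finset Bool) ≠ .univ := by cases b <;> decide
  simp only [fitchStep_eq_singleton_iff h₁ h₂]
  by_cases a₁ : S₁ = {b} <;> by_cases a₂ : S₂ = {b} <;> by_cases u₁ : S₁ = .univ <;>
    by_cases u₂ : S₂ = .univ <;> simp_all

noncomputable def fitchProb (t : PTree) (s : Bool) (S : Finset Bool) : ℝ :=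
  ∑ c : t.Char, if t.fitch c = S then t.charProb s c else 0

noncomputable def fitchProbVia (t : PTree) (p : ℝ) (s : Bool) (S : Finset Bool) : ℝ :=
  ∑ c : t.Char, if t.fitch c = S then t.charProbVia p s c else 0

theorem fitchProbVia_eq_sum (t : PTree) (p : ℝ) (s : Bool) (S : Finset Bool) :
    t.fitchProbVia p s S = ∑ s', transProb p s s' * t.fitchProb s' S := by
  simp only [fitchProbVia, fitchProb, charProbVia, Finset.mul_sum, mul_ite, mul_zero]
  rw [Finset.sum_comm]
  refine Finset.sum_congr rfl fun c _ => ?_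
  split_ifs <;> simp

theorem fitchProb_node_singleton (p₁ p₂ : ℝ) (t₁ t₂ : PTree) (s b : Bool) :
    (node p₁ p₂ t₁ t₂).fitchProb s {b} =
      t₁.fitchProbVia p₁ s {b} * t₂.fitchProbVia p₂ s {b} +
      t₁.fitchProbVia p₁ s .univ * t₂.fitchProbVia p₂ s {b} +
      t₁.fitchProbVia p₁ s {b} * t₂.fitchProbVia p₂ s .univ := by
  simp only [fitchProb, fitchProbVia, Finset.sum_mul_sum, ← Finset.sum_add_distrib]
  rw [sum_char_node]
  refine Finset.sum_congr rfl fun c₁ _ => Finset.sum_congr rfl fun c₂ _ => ?_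
  exact ite_fitchStep_eq_singleton (t₁.fitch_nonempty c₁) (t₂.fitch_nonempty c₂) b _ _

def complement : (t : PTree) → t.Char → t.Char
  | .leaf, c => !c
  | .node _ _ t₁ t₂, c => (t₁.complement c.1, t₂.complement c.2)

theorem complement_involutive : (t : PTree) → Function.Involutive t.complement
  | .leaf, c => Bool.not_not c
  | .node _ _ t₁ t₂, c =>
      Prod.ext (t₁.complement_involutive c.1) (t₂.complement_involutive c.2)

theorem transProb_not_not (p : ℝ) (s s' : Bool) : transProb p (!s) (!s') = transProb p s s' := by
  cases s <;> cases s' <;> rfl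

theorem charProbVia_not_of_charProb_not {t : PTree} {c c' : t.Char}
    (h : ∀ s, t.charProb (!s) c' = t.charProb s c) (p : ℝ) (s : Bool) :
    t.charProbVia p (!s) c' = t.charProbVia p s c := by
  rw [charProbVia, charProbVia, ← Equiv.sum_comp Equiv.boolNot]
  simp only [Equiv.boolNot_apply, transProb_not_not, h]

theorem charProb_complement : (t : PTree) → (s : Bool) → (c : t.Char) →
    t.charProb (!s) (t.complement c) = t.charProb s c
  | .leaf, s, c => by cases s <;> cases c <;> rfl
  | .node p₁ p₂ t₁ t₂, s, c =>
      congrArg₂ (· * ·) (charProbVia_not_of_charProb_not (t₁.charProb_complement · c.1) p₁ s)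
        (charProbVia_not_of_charProb_not (t₂.charProb_complement · c.2) p₂ s)

theorem fitch_complement : (t : PTree) → (c : t.Char) →
    t.fitch (t.complement c) = (t.fitch c).map Equiv.boolNot.toEmbedding
  | .leaf, c => (Finset.map_singleton Equiv.boolNot.toEmbedding c).symm
  | .node _ _ t₁ t₂, c => by
      rw [fitch_node, fitch_node, fitchStep, fitchStep]
      simp only [complement, t₁.fitch_complement, t₂.fitch_complement,
        ← Finset.map_inter, ← Finset.map_union, Finset.map_nonempty]
      split_ifs <;> rfl

theorem fitchProb_not (t : PTree) (s : Bool) (S : Finset Bool) :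
    t.fitchProb (!s) (S.map Equiv.boolNot.toEmbedding) = t.fitchProb s S := by
  rw [fitchProb, ← t.complement_involutive.bijective.sum_comp]
  refine Finset.sum_congr rfl fun c _ => ?_
  simp only [fitch_complement, Finset.map_inj, charProb_complement]

theorem probAlpha_eq_fitchProb (t : PTree) : t.probAlpha = t.fitchProb true {true} :=
  rfl

theorem probBeta_eq_fitchProb (t : PTree) : t.probBeta = t.fitchProb false {true} := by
  rw [← fitchProb_not, Finset.map_singleton]
  rfl

theorem probBoth_eq_fitchProb (t : PTree) (s : Bool) : t.probBoth = t.fitchProb s .univ := by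
  have hα : t.probBoth = t.fitchProb true .univ := by
    rw [Fintype.univ_bool]
    rfl
  cases s
  · rw [hα, ← fitchProb_not, Finset.map_univ_equiv]
    rfl
  · exact hα

theorem fitchProbVia_singleton_true (t : PTree) (p : ℝ) :
    t.fitchProbVia p true {true} = (1 - p) * t.probAlpha + p * t.probBeta := by
  simp [fitchProbVia_eq_sum, transProb, probAlpha_eq_fitchProb, probBeta_eq_fitchProb]

theorem fitchProbVia_univ (t : PTree) (p : ℝ) (s : Bool) :
    t.fitchProbVia p s .univ = t.probBoth := by
  simp only [fitchProbVia_eq_sum, ← probBoth_eq_fitchProb, ← Finset.sum_mul, Fintype.sum_bool,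
    transProb]
  cases s <;> simp

end PTree

theorem stmt9_general (p₁ p₂ : ℝ) (t₁ t₂ : PTree) :
    (PTree.node p₁ p₂ t₁ t₂).probAlpha =
      ((1 + (1 - 2*p₁))/2 * t₁.probAlpha + (1 - (1 - 2*p₁))/2 * t₁.probBeta) *
        ((1 + (1 - 2*p₂))/2 * t₂.probAlpha + (1 - (1 - 2*p₂))/2 * t₂.probBeta)
      + t₁.probBoth *
        ((1 + (1 - 2*p₂))/2 * t₂.probAlpha + (1 - (1 - 2*p₂))/2 * t₂.probBeta)
      + ((1 + (1 - 2*p₁))/2 * t₁.probAlpha + (1 - (1 - 2*p₁))/2 * t₁.probBeta) *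
        t₂.probBoth := by
  rw [PTree.probAlpha_eq_fitchProb, PTree.fitchProb_node_singleton,
    PTree.fitchProbVia_singleton_true, PTree.fitchProbVia_singleton_true,
    PTree.fitchProbVia_univ, PTree.fitchProbVia_univ]
  ring

/-- recursion for `P_α` at the root in terms of the two root
subtrees, where the root is joined to the subtree roots by edges of
substitution probabilities `p₁`, `p₂` and `P_i = 1 − 2p_i`. -/
theorem stmt9 (p₁ p₂ : ℝ) (t₁ t₂ : PTree)
    (h₁ : 0 ≤ p₁ ∧ p₁ ≤ 1/2) (h₂ : 0 ≤ p₂ ∧ p₂ ≤ 1/2)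
    (hv₁ : t₁.valid) (hv₂ : t₂.valid) :
    (PTree.node p₁ p₂ t₁ t₂).probAlpha =
      ((1 + (1 - 2*p₁))/2 * t₁.probAlpha + (1 - (1 - 2*p₁))/2 * t₁.probBeta) *
        ((1 + (1 - 2*p₂))/2 * t₂.probAlpha + (1 - (1 - 2*p₂))/2 * t₂.probBeta)
      + t₁.probBoth *
        ((1 + (1 - 2*p₂))/2 * t₂.probAlpha + (1 - (1 - 2*p₂))/2 * t₂.probBeta)
      + ((1 + (1 - 2*p₁))/2 * t₁.probAlpha + (1 - (1 - 2*p₁))/2 * t₁.probBeta) *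
        t₂.probBoth :=
  stmt9_general p₁ p₂ t₁ t₂
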